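/- The map T(x) = m₂ + A(x − m₁) with A = Σ₂^{1/2}(Σ₂^{1/2} Σ₁ Σ₂^{1/2})^{-1/2} Σ₂^{1/2} pushes the Gaussian N(m₁, Σ₁) forward to N(m₂, Σ₂), i.e., T_# N(m₁,Σ₁) = N(m₂,Σ₂), provided Σ₁ and Σ₂ are symmetric positive definite. -/

import Mathlib

/-!
Each linear functional `a ⬝ᵥ ·` of the affine image `x ↦ c + A (x - m)` is an affine function of
the functional `(Aᵀ a) ⬝ᵥ ·`, so the image of `N(m, Σ)` is `N(c, A Σ Aᵀ)`. For `A = B C⁻¹ B` with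
the symmetric roots `B = Σ₂^{1/2}` and `C = (B Σ₁ B)^{1/2}`, which is invertible because `Σ₁` and
`Σ₂` are, `A Σ₁ Aᵀ = B C⁻¹ (B Σ₁ B) C⁻¹ B = B C⁻¹ C² C⁻¹ B = B² = Σ₂`.
-/

open MeasureTheory ProbabilityTheory Matrix

open scoped ComplexOrder in
noncomputable def Matrix.PosSemidef.sqrt {n 𝕜 : Type*} [Fintype n] [RCLike 𝕜] [DecidableEq n]
    {A : Matrix n n 𝕜} (hA : A.PosSemidef) : Matrix n n 𝕜 :=
  hA.1.eigenvectorUnitary.1 * diagonal ((↑) ∘ Real.sqrt ∘ hA.1.eigenvalues) *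
    (star hA.1.eigenvectorUnitary : Matrix n n 𝕜)

/-- A measure `μ` on `ℝⁿ` is Gaussian with mean `m` and covariance `S` iff every linear
functional pushes it forward to the corresponding real Gaussian. -/
def IsGaussianMV {n : ℕ} (μ : Measure (Fin n → ℝ))
    (m : Fin n → ℝ) (S : Matrix (Fin n) (Fin n) ℝ) : Prop :=
  ∀ a : Fin n → ℝ,
    μ.map (fun x => a ⬝ᵥ x) =
      gaussianReal (a ⬝ᵥ m) (Real.toNNReal (a ⬝ᵥ S.mulVec a))

namespace Matrix

namespace PosSemidef

open scoped ComplexOrder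

variable {n 𝕜 : Type*} [Fintype n] [RCLike 𝕜] [DecidableEq n] {A : Matrix n n 𝕜}

theorem sqrt_eq_cfc (hA : A.PosSemidef) : hA.sqrt = cfc Real.sqrt A := by
  rw [hA.1.cfc_eq]
  rfl

theorem isHermitian_sqrt (hA : A.PosSemidef) : hA.sqrt.IsHermitian := by
  rw [hA.sqrt_eq_cfc]
  exact cfc_predicate Real.sqrt A

theorem sqrt_mul_self (hA : A.PosSemidef) : hA.sqrt * hA.sqrt = A := by
  have hspec : ∀ x ∈ spectrum ℝ A, 0 ≤ x := by
    intro x hx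
    obtain ⟨i, rfl⟩ := hA.1.spectrum_real_eq_range_eigenvalues ▸ hx
    exact hA.eigenvalues_nonneg i
  rw [hA.sqrt_eq_cfc, ← cfc_mul Real.sqrt Real.sqrt A]
  conv_rhs => rw [← cfc_id' ℝ A hA.1]
  exact cfc_congr fun x hx => Real.mul_self_sqrt (hspec x hx)

end PosSemidef

variable {n R : Type*} [Fintype n] [DecidableEq n] [CommRing R]

theorem isUnit_det_of_mul_self_eq {C M : Matrix n n R} (hCM : C * C = M) (hM : IsUnit M.det) :
    IsUnit C.det :=
  isUnit_of_mul_isUnit_left (by rwa [← det_mul, hCM])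

theorem mul_inv_mul_conj_eq_mul_self {B C S : Matrix n n R} (hB : Bᵀ = B) (hC : Cᵀ = C)
    (hCC : C * C = B * S * B) (hCdet : IsUnit C.det) :
    B * C⁻¹ * B * S * (B * C⁻¹ * B)ᵀ = B * B := by
  have hCinv : C⁻¹ * (C * C) * C⁻¹ = 1 := by
    rw [← Matrix.mul_assoc, nonsing_inv_mul C hCdet, Matrix.one_mul, mul_nonsing_inv C hCdet]
  rw [transpose_mul, transpose_mul, transpose_nonsing_inv, hB, hC]
  calc _ = B * (C⁻¹ * (B * S * B) * C⁻¹) * B := by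
        simp only [Matrix.mul_assoc]
    _ = B * B := by rw [← hCC, hCinv, Matrix.mul_one]

end Matrix

theorem IsGaussianMV.map_affine {n : ℕ} {μ : Measure (Fin n → ℝ)} {m : Fin n → ℝ}
    {S : Matrix (Fin n) (Fin n) ℝ} (hμ : IsGaussianMV μ m S) (c : Fin n → ℝ)
    (A : Matrix (Fin n) (Fin n) ℝ) :
    IsGaussianMV (μ.map fun x => c + A *ᵥ (x - m)) c (A * S * Aᵀ) := by
  intro a
  set b := a ᵥ* A
  have hdot : ∀ v : Fin n → ℝ, Measurable fun x : Fin n → ℝ => v ⬝ᵥ x := fun v =>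
    (continuous_const.dotProduct continuous_id).measurable
  have hT : Measurable fun x : Fin n → ℝ => c + A *ᵥ (x - m) :=
    (continuous_const.add (continuous_const.matrix_mulVec
      (continuous_id.sub continuous_const))).measurable
  have hcomp : (fun y => a ⬝ᵥ y) ∘ (fun x => c + A *ᵥ (x - m)) =
      (· + (a ⬝ᵥ c - b ⬝ᵥ m)) ∘ (fun x => b ⬝ᵥ x) := by
    funext x
    simp only [Function.comp_apply, dotProduct_add, mulVec_sub, dotProduct_sub,
      dotProduct_mulVec a A, b]
    ring
  have hvar : a ⬝ᵥ (A * S * Aᵀ) *ᵥ a = b ⬝ᵥ S *ᵥ b := by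
    rw [← mulVec_mulVec, ← mulVec_mulVec, mulVec_transpose, dotProduct_mulVec]
  rw [Measure.map_map (hdot a) hT, hcomp, ← Measure.map_map (measurable_add_const _) (hdot b),
    hμ b, gaussianReal_map_add_const, hvar]
  congr 1
  ring

theorem gaussian_transport_map_general {n : ℕ}
    (m₁ m₂ : Fin n → ℝ)
    (S₁ S₂ : Matrix (Fin n) (Fin n) ℝ)
    (h₁ : S₁.PosDef) (h₂ : S₂.PosDef)
    (hM : (h₂.posSemidef.sqrt * S₁ * h₂.posSemidef.sqrt).PosSemidef)
    (μ : Measure (Fin n → ℝ))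
    (hμ : IsGaussianMV μ m₁ S₁) :
    IsGaussianMV
      (μ.map fun x =>
        m₂ + (h₂.posSemidef.sqrt * (hM.sqrt)⁻¹ * h₂.posSemidef.sqrt).mulVec (x - m₁))
      m₂ S₂ := by
  set B := h₂.posSemidef.sqrt
  set C := hM.sqrt
  have hBB : B * B = S₂ := h₂.posSemidef.sqrt_mul_self
  have hBdet : IsUnit B.det := isUnit_det_of_mul_self_eq hBB h₂.det_pos.ne'.isUnit
  have hCdet : IsUnit C.det := by
    refine isUnit_det_of_mul_self_eq hM.sqrt_mul_self ?_
    simpa only [det_mul] using (hBdet.mul h₁.det_pos.ne'.isUnit).mul hBdet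
  have hcov : B * C⁻¹ * B * S₁ * (B * C⁻¹ * B)ᵀ = S₂ := by
    rw [← hBB]
    exact mul_inv_mul_conj_eq_mul_self (isHermitian_iff_isSymm.mp h₂.posSemidef.isHermitian_sqrt)
      (isHermitian_iff_isSymm.mp hM.isHermitian_sqrt) hM.sqrt_mul_self hCdet
  have := hμ.map_affine m₂ (B * C⁻¹ * B)
  rwa [hcov] at this

/-- The map `T x = m₂ + A (x - m₁)` with
`A = S₂^{1/2} (S₂^{1/2} S₁ S₂^{1/2})^{-1/2} S₂^{1/2}` pushes `N(m₁, S₁)` forward to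
`N(m₂, S₂)`, provided `S₁, S₂` are symmetric positive definite. -/
theorem gaussian_transport_map {n : ℕ}
    (m₁ m₂ : Fin n → ℝ)
    (S₁ S₂ : Matrix (Fin n) (Fin n) ℝ)
    (h₁ : S₁.PosDef) (h₂ : S₂.PosDef)
    (hM : (h₂.posSemidef.sqrt * S₁ * h₂.posSemidef.sqrt).PosSemidef)
    (μ : Measure (Fin n → ℝ)) [IsProbabilityMeasure μ]
    (hμ : IsGaussianMV μ m₁ S₁) :
    IsGaussianMV
      (μ.map fun x =>
        m₂ + (h₂.posSemidef.sqrt * (hM.sqrt)⁻¹ * h₂.posSemidef.sqrt).mulVec (x - m₁))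
      m₂ S₂ :=
  gaussian_transport_map_general m₁ m₂ S₁ S₂ h₁ h₂ hM μ hμ
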